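/- In the polynomial ring Z[x,y][s], set a = −64(x+1)^2 (y−1)^3, b = 4xy − 3x + 4y − 6, and c = −8xy^2 + 12xy − 6x − 8y^2 + 12y − 3. Then (s−1)^3 divides (s^3 + b s^2 + c s + x)^2 − a s^2 (s − y). Equivalently, the rational function g(s) = (s^3 + bs^2 + cs + x)^2 / (a s^2 (s−y)) satisfies g(1) = 1, g'(1) = 0, and g''(1) = 0 wherever a(1−y) ≠ 0. -/
import Mathlib


open Polynomial

/-- The coefficient ring `ℤ[x,y]`. -/
abbrev R2Z : Type := MvPolynomial (Fin 2) ℤ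

noncomputable def xx : R2Z := MvPolynomial.X 0
noncomputable def yy : R2Z := MvPolynomial.X 1

noncomputable def aa : R2Z := -64 * (xx + 1) ^ 2 * (yy - 1) ^ 3
noncomputable def bb : R2Z := 4 * xx * yy - 3 * xx + 4 * yy - 6
noncomputable def cc : R2Z :=
  -8 * xx * yy ^ 2 + 12 * xx * yy - 6 * xx - 8 * yy ^ 2 + 12 * yy - 3

/-- With `a = −64(x+1)²(y−1)³`, `b = 4xy − 3x + 4y − 6`, and
`c = −8xy² + 12xy − 6x − 8y² + 12y − 3` in `ℤ[x,y]`, the polynomial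
`(s³ + bs² + cs + x)² − a s² (s − y)` in `ℤ[x,y][s]` is divisible by `(s − 1)³`. -/
theorem statement11 :
    ((X : R2Z[X]) - 1) ^ 3 ∣
      (X ^ 3 + C bb * X ^ 2 + C cc * X + C xx) ^ 2 - C aa * X ^ 2 * (X - C yy) := by
  refine ⟨X ^ 3 + C (8 * xx * yy - 6 * xx + 8 * yy - 9) * X ^ 2
    + C (16 * xx ^ 2 * yy ^ 2 - 24 * xx ^ 2 * yy + 9 * xx ^ 2
        + 16 * xx * yy ^ 2 - 24 * xx * yy + 6 * xx) * X
    - C (xx ^ 2), ?_⟩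
  simp only [aa, bb, cc, xx, yy, map_add, map_sub, map_mul, map_pow, map_neg,
    map_one, map_ofNat]
  ring
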